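/- arXiv:2103.03035 — 2 statements merged into one kernel-verified Lean document; each statement's English description precedes it below -/
import Mathlib

section
/- For every graph G, the associated graph H_G (with vertex sets X(v), X̄(v), Y(v), Ȳ(v), Z(v), E(v) as constructed) is an undirected path graph, i.e., it is the intersection graph of a family of paths in a tree. -/
/-- The vertex type of the graph `H_G` associated to a graph `G` with `n`
vertices: `X(v)`, `X̄(v)`, `Y(v)`, `Ȳ(v)`, `Z(v)` (split into `z`/`z̄`), and
the edge-vertices `E = {(u,v) : {u,v} ∈ E(G)}`. -/
inductive HVert (V : Type) (G : SimpleGraph V) (n : ℕ) : Type where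
  | x : V → Fin (2 * n) → HVert V G n
  | xb : V → Fin (2 * n) → HVert V G n
  | y : V → Fin (2 * n + 1) → HVert V G n
  | yb : V → Fin (2 * n + 1) → HVert V G n
  | z : V → Fin (2 * n + 1) → HVert V G n
  | zb : V → Fin (2 * n + 1) → HVert V G n
  | e : (p : V × V) → G.Adj p.1 p.2 → HVert V G n

namespace HVert

/-- Vertices of the big clique `⋃_v (Y(v) ∪ Ȳ(v) ∪ E(v))`. -/
def inClique {V : Type} {G : SimpleGraph V} {n : ℕ} : HVert V G n → Prop
  | .y _ _ => True
  | .yb _ _ => True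
  | .e _ _ => True
  | _ => False

/-- The (one-directional) base edge relation of `H_G`. -/
def baseRel {V : Type} {G : SimpleGraph V} {n : ℕ} (a b : HVert V G n) : Prop :=
  (inClique a ∧ inClique b) ∨
  (∃ v i j, a = x v i ∧ b = y v j) ∨
  (∃ v i j, a = xb v i ∧ b = yb v j) ∨
  (∃ (v u : V) (i : Fin (2 * n)) (h : G.Adj v u), a = x v i ∧ b = e (v, u) h) ∨
  (∃ (v u : V) (i : Fin (2 * n)) (h : G.Adj u v), a = xb v i ∧ b = e (u, v) h) ∨
  (∃ (v : V) (i j : Fin (2 * n)), (i : ℕ) + n = (j : ℕ) ∧ a = x v i ∧ b = x v j) ∨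
  (∃ (v : V) (i j : Fin (2 * n)), (i : ℕ) + n = (j : ℕ) ∧ a = xb v i ∧ b = xb v j) ∨
  (∃ v j, (a = y v j ∨ a = yb v j) ∧ (b = z v j ∨ b = zb v j))

end HVert

/-- The graph `H_G` associated to `G`. -/
def HG (V : Type) (G : SimpleGraph V) (n : ℕ) : SimpleGraph (HVert V G n) :=
  SimpleGraph.fromRel HVert.baseRel

/-- The set `S = X ∪ X̄ ∪ Z` of `H_G`. -/
def SsetH (V : Type) (G : SimpleGraph V) (n : ℕ) : Set (HVert V G n) :=
  {h | (∃ v i, h = HVert.x v i) ∨ (∃ v i, h = HVert.xb v i) ∨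
    (∃ v j, h = HVert.z v j) ∨ (∃ v j, h = HVert.zb v j)}

/-- The set `Z` of `H_G`. -/
def ZsetH (V : Type) (G : SimpleGraph V) (n : ℕ) : Set (HVert V G n) :=
  {h | (∃ v j, h = HVert.z v j) ∨ (∃ v j, h = HVert.zb v j)}

/-- An induced subgraph `G[F]` is an `S`-forest if it contains no cycle
through a vertex of `S`. -/
def IsSForest {W : Type*} (G : SimpleGraph W) (S : Set W) (F : Set W) : Prop :=
  ¬ ∃ v : F, (v : W) ∈ S ∧ ∃ c : (G.induce F).Walk v v, c.IsCycle


open SimpleGraph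

section ParentTree
variable {α : Type} (p : α → α)

def ptG : SimpleGraph α := SimpleGraph.fromRel (fun a b => p a = b)

lemma ptG_adj {a b : α} : (ptG p).Adj a b ↔ a ≠ b ∧ (p a = b ∨ p b = a) :=
  SimpleGraph.fromRel_adj _ a b

variable (rk : α → ℕ) (root : α)
variable (hroot : p root = root) (hrk : ∀ x, x ≠ root → rk (p x) < rk x)

include hrk in
lemma pt_reach : ∀ x, (ptG p).Reachable x root := by
  have H : ∀ k x, rk x ≤ k → (ptG p).Reachable x root := by
    intro k
    induction k with
    | zero =>
      intro x hx
      by_cases h : x = root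
      · exact h ▸ Reachable.refl _
      · exact absurd (hrk x h) (by omega)
    | succ k ih =>
      intro x hx
      by_cases h : x = root
      · exact h ▸ Reachable.refl _
      · have hlt := hrk x h
        have hadj : (ptG p).Adj x (p x) := by
          rw [ptG_adj]
          refine ⟨?_, Or.inl rfl⟩
          intro hh
          rw [← hh] at hlt
          exact lt_irrefl _ hlt
        exact hadj.reachable.trans (ih (p x) (by omega))
  exact fun x => H (rk x) x le_rfl

lemma list_exists_max {l : List α} (h : l ≠ []) : ∃ m ∈ l, ∀ y ∈ l, rk y ≤ rk m := by
  induction l with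
  | nil => exact absurd rfl h
  | cons x l ih =>
    cases l with
    | nil => exact ⟨x, by simp⟩
    | cons z l' =>
      obtain ⟨m, hm, hmax⟩ := ih (by simp)
      by_cases hc : rk x ≤ rk m
      · exact ⟨m, by simp [hm], by
          intro y hy
          rcases List.mem_cons.mp hy with rfl | hy
          · exact hc
          · exact hmax y hy⟩
      · exact ⟨x, by simp, by
          intro y hy
          rcases List.mem_cons.mp hy with rfl | hy
          · exact le_rfl
          · exact le_trans (hmax y hy) (by omega)⟩

include hroot hrk in
lemma pt_acyclic : (ptG p).IsAcyclic := by
  classical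
  intro u c hc
  have hsupne : c.support ≠ [] := c.support_ne_nil
  obtain ⟨m, hm, hmax⟩ := list_exists_max rk hsupne
  have hc' : (c.rotate m hm).IsCycle := hc.rotate hm
  have hmax' : ∀ y ∈ (c.rotate m hm).support, rk y ≤ rk m := by
    intro y hy
    apply hmax
    have := SimpleGraph.Walk.support_rotate c m hm
    rcases List.mem_cons.mp ((SimpleGraph.Walk.support_eq_cons (c.rotate m hm)) ▸ hy) with rfl | hy'
    · exact hm
    · have : y ∈ c.support.tail := this.mem_iff.mp hy'
      exact List.mem_of_mem_tail this
  -- key step: a neighbor of m inside the rotated cycle satisfies p m = that neighbor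
  have key : ∀ b, (ptG p).Adj m b → b ∈ (c.rotate m hm).support → p m = b := by
    intro b hadj hbs
    rw [ptG_adj] at hadj
    obtain ⟨hne, h | h⟩ := hadj
    · exact h
    · by_cases hb : b = root
      · subst hb
        rw [hroot] at h
        exact absurd h.symm hne
      · have h1 := hrk b hb
        rw [h] at h1
        exact absurd (hmax' b hbs) (by omega)
  generalize hcc : c.rotate m hm = c2 at hc' hmax' key
  cases c2 with
  | nil => exact hc'.ne_nil rfl
  | @cons _ w _ hadj q =>
    rw [SimpleGraph.Walk.cons_isCycle_iff] at hc'
    obtain ⟨hq, hedge⟩ := hc'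
    cases q with
    | nil => exact (ptG p).loopless.irrefl m hadj
    | cons h' q' =>
      obtain ⟨x, r, hxm, heq⟩ := SimpleGraph.Walk.exists_cons_eq_concat h' q'
      have hxe : s(x, m) ∈ (SimpleGraph.Walk.cons h' q').edges := by
        rw [heq, SimpleGraph.Walk.edges_concat]
        simp
      have hxw : x ≠ w := by
        rintro rfl
        exact hedge (by rwa [Sym2.eq_swap] at hxe)
      have hxs : x ∈ (SimpleGraph.Walk.cons h' q').support :=
        SimpleGraph.Walk.fst_mem_support_of_mem_edges _ hxe
      have h1 : p m = w := key w hadj (by simp)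
      have h2 : p m = x := key x hxm.symm (by
        rw [SimpleGraph.Walk.support_cons, List.mem_cons]
        exact Or.inr hxs)
      exact hxw (h2 ▸ h1)

end ParentTree

section TreeDef
variable (V : Type) (n : ℕ)

inductive TN : Type where
  | c : TN
  | t : V → Fin n → TN
  | s : V → Fin n → TN
  | a : V → Fin (2 * n + 1) → TN
  | b : V → Fin (2 * n + 1) → TN

variable {V n}

def tnParent : TN V n → TN V n
  | .c => .c
  | .t v i => if h : (i : ℕ) = 0 then .c else .t v ⟨(i : ℕ) - 1, by omega⟩
  | .s v i => if h : (i : ℕ) = 0 then .c else .s v ⟨(i : ℕ) - 1, by omega⟩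
  | .a _ _ => .c
  | .b v j => .a v j

def tnRk : TN V n → ℕ
  | .c => 0
  | .t _ i => (i : ℕ) + 1
  | .s _ i => (i : ℕ) + 1
  | .a _ _ => 1
  | .b _ _ => 2

lemma tnRk_parent : ∀ x : TN V n, x ≠ .c → tnRk (tnParent x) < tnRk x := by
  intro x hx
  cases x with
  | c => exact absurd rfl hx
  | t v i =>
    by_cases h : (i : ℕ) = 0 <;> simp [tnParent, tnRk, h] <;> omega
  | s v i =>
    by_cases h : (i : ℕ) = 0 <;> simp [tnParent, tnRk, h] <;> omega
  | a v j => simp [tnParent, tnRk]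
  | b v j => simp [tnParent, tnRk]

/-- The tree. -/
def TT : SimpleGraph (TN V n) := ptG tnParent

lemma TT_isTree : (TT : SimpleGraph (TN V n)).IsTree := by
  constructor
  · rw [SimpleGraph.connected_iff]
    refine ⟨fun a b => ?_, ⟨.c⟩⟩
    exact (pt_reach tnParent tnRk TN.c tnRk_parent a).trans
      (pt_reach tnParent tnRk TN.c tnRk_parent b).symm
  · exact pt_acyclic tnParent tnRk TN.c rfl tnRk_parent

lemma TT_adj_c_a (v : V) (j : Fin (2 * n + 1)) : (TT : SimpleGraph (TN V n)).Adj .c (.a v j) := by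
  rw [TT, ptG_adj]
  exact ⟨by simp, Or.inr rfl⟩

lemma TT_adj_a_b (v : V) (j : Fin (2 * n + 1)) :
    (TT : SimpleGraph (TN V n)).Adj (.a v j) (.b v j) := by
  rw [TT, ptG_adj]
  exact ⟨by simp, Or.inr rfl⟩

lemma TT_adj_c_t (v : V) (i : Fin n) (h : (i : ℕ) = 0) :
    (TT : SimpleGraph (TN V n)).Adj .c (.t v i) := by
  rw [TT, ptG_adj]
  exact ⟨by simp, Or.inr (by simp [tnParent, h])⟩

lemma TT_adj_t_t (v : V) (i i' : Fin n) (h : (i : ℕ) + 1 = (i' : ℕ)) :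
    (TT : SimpleGraph (TN V n)).Adj (.t v i) (.t v i') := by
  rw [TT, ptG_adj]
  refine ⟨by simp; omega, Or.inr ?_⟩
  simp only [tnParent]
  rw [dif_neg (by omega)]
  congr 1
  apply Fin.ext
  simp
  omega

lemma TT_adj_c_s (v : V) (i : Fin n) (h : (i : ℕ) = 0) :
    (TT : SimpleGraph (TN V n)).Adj .c (.s v i) := by
  rw [TT, ptG_adj]
  exact ⟨by simp, Or.inr (by simp [tnParent, h])⟩

lemma TT_adj_s_s (v : V) (i i' : Fin n) (h : (i : ℕ) + 1 = (i' : ℕ)) :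
    (TT : SimpleGraph (TN V n)).Adj (.s v i) (.s v i') := by
  rw [TT, ptG_adj]
  refine ⟨by simp; omega, Or.inr ?_⟩
  simp only [tnParent]
  rw [dif_neg (by omega)]
  congr 1
  apply Fin.ext
  simp
  omega

end TreeDef

section Lists

lemma walk_of_chain {β : Type} {T : SimpleGraph β} :
    ∀ (l : List β) (x : β), List.IsChain T.Adj (x :: l) →
      ∃ (b : β) (w : T.Walk x b), w.support = x :: l := by
  intro l
  induction l with
  | nil => exact fun x _ => ⟨x, .nil, rfl⟩
  | cons y l ih =>
    intro x h
    rw [List.isChain_cons_cons] at h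
    obtain ⟨b, w, hw⟩ := ih y h.2
    exact ⟨b, .cons h.1 w, by simp [hw]⟩

lemma exists_path_list {β : Type} {T : SimpleGraph β} (l : List β) (hne : l ≠ [])
    (hchain : l.IsChain T.Adj) (hnd : l.Nodup) :
    ∃ (a b : β) (w : T.Walk a b), w.IsPath ∧ ({x | x ∈ l} : Set β) = {x | x ∈ w.support} := by
  cases l with
  | nil => exact absurd rfl hne
  | cons x l =>
    obtain ⟨b, w, hw⟩ := walk_of_chain l x hchain
    exact ⟨x, b, w, by rw [SimpleGraph.Walk.isPath_def, hw]; exact hnd, by rw [hw]⟩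

lemma chain'_cons_ofFn {β : Type} {R : β → β → Prop} {k : ℕ} {x : β} {f : Fin k → β}
    (h0 : ∀ h : 0 < k, R x (f ⟨0, h⟩))
    (hstep : ∀ (i) (hi : i + 1 < k), R (f ⟨i, by omega⟩) (f ⟨i + 1, hi⟩)) :
    List.IsChain R (x :: List.ofFn f) := by
  rw [List.isChain_cons]
  refine ⟨?_, List.isChain_ofFn.mpr hstep⟩
  intro y hy
  cases k with
  | zero => simp at hy
  | succ k =>
    rw [List.ofFn_succ] at hy
    simp only [List.head?_cons, Option.mem_def, Option.some.injEq] at hy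
    subst hy
    exact h0 (by omega)

end Lists

section PL
variable {V : Type} {G : SimpleGraph V} {n : ℕ}

def xidx (i : Fin (2 * n)) : Fin n := ⟨(i : ℕ) % n, Nat.mod_lt _ (by have := i.isLt; omega)⟩

def tList (v : V) : List (TN V n) := List.ofFn (fun i : Fin n => TN.t v i)
def sList (v : V) : List (TN V n) := List.ofFn (fun i : Fin n => TN.s v i)

def pl : HVert V G n → List (TN V n)
  | .x v i => [.t v (xidx i)]
  | .xb v i => [.s v (xidx i)]
  | .y v j => .b v j :: .a v j :: .c :: tList v
  | .yb v j => .b v j :: .a v j :: .c :: sList v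
  | .z v j => [.a v j]
  | .zb v j => [.b v j]
  | .e p _ => (tList p.1).reverse ++ .c :: sList p.2

lemma chain_c_t (v : V) : List.IsChain (TT : SimpleGraph (TN V n)).Adj (.c :: tList v) := by
  refine chain'_cons_ofFn (fun h => TT_adj_c_t v ⟨0, h⟩ rfl) (fun i hi => ?_)
  exact TT_adj_t_t v _ _ rfl

lemma chain_c_s (v : V) : List.IsChain (TT : SimpleGraph (TN V n)).Adj (.c :: sList v) := by
  refine chain'_cons_ofFn (fun h => TT_adj_c_s v ⟨0, h⟩ rfl) (fun i hi => ?_)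
  exact TT_adj_s_s v _ _ rfl

lemma chain_t_rev (v : V) :
    List.IsChain (TT : SimpleGraph (TN V n)).Adj (tList v).reverse := by
  rw [List.isChain_reverse]
  refine List.isChain_ofFn.mpr (fun i hi => ?_)
  exact (TT_adj_t_t v _ _ rfl).symm

lemma pl_ne_nil (h : HVert V G n) : pl h ≠ [] := by
  cases h <;> simp [pl]

lemma pl_chain (h : HVert V G n) : (pl h).IsChain (TT : SimpleGraph (TN V n)).Adj := by
  cases h with
  | x v i => exact List.isChain_singleton _
  | xb v i => exact List.isChain_singleton _
  | z v j => exact List.isChain_singleton _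
  | zb v j => exact List.isChain_singleton _
  | y v j =>
    rw [pl, List.isChain_cons_cons, List.isChain_cons_cons]
    exact ⟨(TT_adj_a_b v j).symm, (TT_adj_c_a v j).symm, chain_c_t v⟩
  | yb v j =>
    rw [pl, List.isChain_cons_cons, List.isChain_cons_cons]
    exact ⟨(TT_adj_a_b v j).symm, (TT_adj_c_a v j).symm, chain_c_s v⟩
  | e p hp =>
    rw [pl, List.isChain_append]
    refine ⟨chain_t_rev p.1, chain_c_s p.2, fun x hx y hy => ?_⟩
    rw [List.getLast?_reverse] at hx
    rw [List.head?_cons, Option.mem_def, Option.some.injEq] at hy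
    subst hy
    rcases n with _ | m
    · simp [tList] at hx
    · rw [tList, List.ofFn_succ, List.head?_cons, Option.mem_def, Option.some.injEq] at hx
      subst hx
      exact (TT_adj_c_t p.1 _ rfl).symm

lemma pl_nodup (h : HVert V G n) : (pl h).Nodup := by
  cases h with
  | x v i => exact List.nodup_singleton _
  | xb v i => exact List.nodup_singleton _
  | z v j => exact List.nodup_singleton _
  | zb v j => exact List.nodup_singleton _
  | y v j =>
    simp [pl, tList, List.mem_ofFn, List.nodup_ofFn]
    exact fun i i' hij => by simpa using hij
  | yb v j =>
    simp [pl, sList, List.mem_ofFn, List.nodup_ofFn]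
    exact fun i i' hij => by simpa using hij
  | e p hp =>
    simp [pl, tList, sList, List.nodup_append, List.mem_ofFn, List.nodup_ofFn,
      List.disjoint_left]
    constructor
    · exact fun i i' hij => by simpa using hij
    · exact fun i i' hij => by simpa using hij

end PL

lemma mod_eq_mod_iff {n a b : ℕ} (ha : a < 2 * n) (hb : b < 2 * n) :
    a % n = b % n ↔ (a = b ∨ a + n = b ∨ b + n = a) := by
  have hn : 0 < n := by omega
  have e1 : a % n = if a < n then a else a - n := by
    split
    · exact Nat.mod_eq_of_lt (by omega)
    · rw [Nat.mod_eq_sub_mod (by omega)]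
      exact Nat.mod_eq_of_lt (by omega)
  have e2 : b % n = if b < n then b else b - n := by
    split
    · exact Nat.mod_eq_of_lt (by omega)
    · rw [Nat.mod_eq_sub_mod (by omega)]
      exact Nat.mod_eq_of_lt (by omega)
  rw [e1, e2]
  split_ifs <;> omega

set_option maxHeartbeats 4000000 in
/-- For every graph `G`, the associated graph `H_G` is an undirected path
graph: the intersection graph of a family of paths in a tree. -/
theorem stmt13 (V : Type) (G : SimpleGraph V) (n : ℕ) (hn : Nat.card V = n) :
    ∃ (N : Type) (T : SimpleGraph N) (P : HVert V G n → Set N),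
      T.IsTree ∧
      (∀ h : HVert V G n, ∃ (a b : N) (w : T.Walk a b), w.IsPath ∧
        P h = {x : N | x ∈ w.support}) ∧
      (∀ h1 h2 : HVert V G n, h1 ≠ h2 →
        ((HG V G n).Adj h1 h2 ↔ (P h1 ∩ P h2).Nonempty)) := by
  classical
  refine ⟨TN V n, TT, fun h => {x | x ∈ pl h}, TT_isTree, fun h => ?_, fun h1 h2 hne => ?_⟩
  · obtain ⟨a, b, w, hw, he⟩ := exists_path_list (pl h) (pl_ne_nil h) (pl_chain h) (pl_nodup h)
    exact ⟨a, b, w, hw, he⟩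
  · rw [HG, SimpleGraph.fromRel_adj, Set.inter_nonempty]
    cases h1 <;> cases h2 <;>
      simp [HVert.baseRel, HVert.inClique, pl, tList, sList, List.mem_ofFn,
        Prod.ext_iff, proof_irrel_heq] at hne ⊢ <;>
      first
      | assumption
      | (rintro rfl; assumption)
      | (constructor <;> rintro ⟨rfl, rfl⟩ <;> exact ⟨rfl, rfl⟩)
      | exact iff_of_true hne ⟨TN.c, by simp, by simp⟩
      | exact ⟨TN.c, by simp, by simp⟩
      | (rename_i v i v' i'
         have hiff : xidx i = xidx i' ↔ ((i : ℕ) = (i' : ℕ) ∨ (i : ℕ) + n = (i' : ℕ) ∨ (i' : ℕ) + n = (i : ℕ)) := by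
           rw [Fin.ext_iff]
           exact mod_eq_mod_iff i.isLt i'.isLt
         rw [hiff]
         constructor
         · rintro ⟨h1, ⟨hkj, rfl⟩ | ⟨hkj, rfl⟩⟩
           · exact ⟨rfl, Or.inr (Or.inl hkj)⟩
           · exact ⟨rfl, Or.inr (Or.inr hkj)⟩
         · rintro ⟨rfl, h | h | h⟩
           · exact absurd (Fin.ext h) (hne rfl)
           · exact ⟨hne, Or.inl ⟨h, rfl⟩⟩
           · exact ⟨hne, Or.inr ⟨h, rfl⟩⟩)
end

section
/- Let G be a graph with n vertices and m edges, A ⊆ V(G) with cut-set of size k, and H_G the associated graph with S = X ∪ X̄ ∪ Z. Then the set U = ∪_{v∈A} (X(v) ∪ Ȳ(v)) ∪ ∪_{v∉A} (X̄(v) ∪ Y(v)) ∪ (E \ {(u,v) : u∈A, v∉A, {u,v}∈E(G)}) is a subset feedback vertex set of (H_G, S) of size 4n² + n + 2m − k, i.e., H_G − U has no cycle through a vertex of S. -/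
open HVert SimpleGraph

lemma no_cycle_of_unique_nbr {W : Type*} {G : SimpleGraph W} {v : W}
    (hu : ∀ a b, G.Adj v a → G.Adj v b → a = b) (c : G.Walk v v) : ¬ c.IsCycle := by
  intro hc
  cases c with
  | nil => exact hc.isCircuit.ne_nil rfl
  | @cons _ u _ h p =>
    obtain ⟨w, h', q, hq⟩ := SimpleGraph.Walk.exists_eq_cons_of_ne h.ne p.reverse
    have hw : w = u := hu w u h' h
    have hmem : s(v, w) ∈ p.reverse.edges := by rw [hq]; simp
    rw [SimpleGraph.Walk.edges_reverse, List.mem_reverse] at hmem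
    have hnd := hc.isCircuit.isTrail.edges_nodup
    rw [SimpleGraph.Walk.edges_cons] at hnd
    exact (List.nodup_cons.mp hnd).1 (hw ▸ hmem)

variable {V : Type} {G : SimpleGraph V} {n : ℕ}

lemma adj_cases_x {v : V} {i : Fin (2*n)} {b : HVert V G n}
    (h : (HG V G n).Adj (.x v i) b) :
    (∃ j, b = y v j) ∨ (∃ (u : V) (hu : G.Adj v u), b = e (v,u) hu) ∨
    (∃ j : Fin (2*n), ((i:ℕ) + n = (j:ℕ) ∨ (j:ℕ) + n = (i:ℕ)) ∧ b = x v j) := by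
  rw [HG, SimpleGraph.fromRel_adj] at h
  obtain ⟨-, h | h⟩ := h <;>
    rcases h with ⟨h1, h2⟩ | ⟨v', i', j', h1, h2⟩ | ⟨v', i', j', h1, h2⟩ |
      ⟨v', u', i', hu, h1, h2⟩ | ⟨v', u', i', hu, h1, h2⟩ |
      ⟨v', i', j', hij, h1, h2⟩ | ⟨v', i', j', hij, h1, h2⟩ | ⟨v', j', h1, h2⟩ <;>
    simp_all [baseRel, inClique]

lemma adj_cases_xb {v : V} {i : Fin (2*n)} {b : HVert V G n}
    (h : (HG V G n).Adj (.xb v i) b) :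
    (∃ j, b = yb v j) ∨ (∃ (u : V) (hu : G.Adj u v), b = e (u,v) hu) ∨
    (∃ j : Fin (2*n), ((i:ℕ) + n = (j:ℕ) ∨ (j:ℕ) + n = (i:ℕ)) ∧ b = xb v j) := by
  rw [HG, SimpleGraph.fromRel_adj] at h
  obtain ⟨-, h | h⟩ := h <;>
    rcases h with ⟨h1, h2⟩ | ⟨v', i', j', h1, h2⟩ | ⟨v', i', j', h1, h2⟩ |
      ⟨v', u', i', hu, h1, h2⟩ | ⟨v', u', i', hu, h1, h2⟩ |
      ⟨v', i', j', hij, h1, h2⟩ | ⟨v', i', j', hij, h1, h2⟩ | ⟨v', j', h1, h2⟩ <;>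
    simp_all [baseRel, inClique]

lemma adj_cases_z {v : V} {j : Fin (2*n+1)} {b : HVert V G n}
    (h : (HG V G n).Adj (.z v j) b) : b = y v j ∨ b = yb v j := by
  rw [HG, SimpleGraph.fromRel_adj] at h
  obtain ⟨-, h | h⟩ := h <;>
    rcases h with ⟨h1, h2⟩ | ⟨v', i', j', h1, h2⟩ | ⟨v', i', j', h1, h2⟩ |
      ⟨v', u', i', hu, h1, h2⟩ | ⟨v', u', i', hu, h1, h2⟩ |
      ⟨v', i', j', hij, h1, h2⟩ | ⟨v', i', j', hij, h1, h2⟩ | ⟨v', j', h1, h2⟩ <;>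
    simp_all [baseRel, inClique]

lemma adj_cases_zb {v : V} {j : Fin (2*n+1)} {b : HVert V G n}
    (h : (HG V G n).Adj (.zb v j) b) : b = y v j ∨ b = yb v j := by
  rw [HG, SimpleGraph.fromRel_adj] at h
  obtain ⟨-, h | h⟩ := h <;>
    rcases h with ⟨h1, h2⟩ | ⟨v', i', j', h1, h2⟩ | ⟨v', i', j', h1, h2⟩ |
      ⟨v', u', i', hu, h1, h2⟩ | ⟨v', u', i', hu, h1, h2⟩ |
      ⟨v', i', j', hij, h1, h2⟩ | ⟨v', i', j', hij, h1, h2⟩ | ⟨v', j', h1, h2⟩ <;>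
    simp_all [baseRel, inClique]

set_option maxHeartbeats 2000000 in
/-- For `A ⊆ V(G)` with cut-set of size `k`, the described set `U` is a
subset feedback vertex set of `(H_G, S)` of size `4n² + n + 2m − k`. -/
theorem stmt14 (V : Type) [Finite V] (G : SimpleGraph V) (n m : ℕ)
    (hn : Nat.card V = n) (hm : G.edgeSet.ncard = m)
    (A : Set V) (k : ℕ)
    (hk : {p : V × V | G.Adj p.1 p.2 ∧ p.1 ∈ A ∧ p.2 ∉ A}.ncard = k) :
    let U : Set (HVert V G n) := {h | match h with
      | .x v _ => v ∈ A
      | .yb v _ => v ∈ A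
      | .xb v _ => v ∉ A
      | .y v _ => v ∉ A
      | .e p _ => ¬ (p.1 ∈ A ∧ p.2 ∉ A)
      | _ => False}
    U.ncard = 4 * n ^ 2 + n + 2 * m - k ∧
      IsSForest (HG V G n) (SsetH V G n) Uᶜ := by
  intro U
  constructor
  · classical
    have : Fintype V := Fintype.ofFinite V
    set a := A.ncard with ha
    set bb := Aᶜ.ncard with hb
    have hab : a + bb = n := by
      rw [ha, hb, Set.ncard_add_ncard_compl]; exact hn
    have hprod : ∀ (s : Set V) (N : ℕ),
        (s ×ˢ (Set.univ : Set (Fin N))).ncard = s.ncard * N := by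
      intro s N
      rw [← Nat.card_coe_set_eq, Nat.card_congr (Equiv.Set.prod s Set.univ),
        Nat.card_prod, Nat.card_coe_set_eq, Nat.card_coe_set_eq, Set.ncard_univ,
        Nat.card_eq_fintype_card, Fintype.card_fin]
    set f1 : V × Fin (2*n) → HVert V G n := fun p => .x p.1 p.2 with hf1
    set f2 : V × Fin (2*n+1) → HVert V G n := fun p => .yb p.1 p.2 with hf2
    set f3 : V × Fin (2*n) → HVert V G n := fun p => .xb p.1 p.2 with hf3
    set f4 : V × Fin (2*n+1) → HVert V G n := fun p => .y p.1 p.2 with hf4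
    set f5 : {p : V × V // G.Adj p.1 p.2} → HVert V G n := fun q => .e q.1 q.2 with hf5
    set T : Set {p : V × V // G.Adj p.1 p.2} := {q | ¬ (q.1.1 ∈ A ∧ q.1.2 ∉ A)} with hT
    have hU : U = f1 '' (A ×ˢ Set.univ) ∪ f2 '' (A ×ˢ Set.univ) ∪ f3 '' (Aᶜ ×ˢ Set.univ)
        ∪ f4 '' (Aᶜ ×ˢ Set.univ) ∪ f5 '' T := by
      ext h
      cases h <;>
        simp [U, hf1, hf2, hf3, hf4, hf5, hT, Set.mem_image, Prod.ext_iff, Subtype.exists]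
      exact fun _ => ‹_›
    have inj1 : Function.Injective f1 := by
      intro p q h; rw [hf1] at h; simp only [HVert.x.injEq] at h; exact Prod.ext h.1 h.2
    have inj2 : Function.Injective f2 := by
      intro p q h; rw [hf2] at h; simp only [HVert.yb.injEq] at h; exact Prod.ext h.1 h.2
    have inj3 : Function.Injective f3 := by
      intro p q h; rw [hf3] at h; simp only [HVert.xb.injEq] at h; exact Prod.ext h.1 h.2
    have inj4 : Function.Injective f4 := by
      intro p q h; rw [hf4] at h; simp only [HVert.y.injEq] at h; exact Prod.ext h.1 h.2
    have inj5 : Function.Injective f5 := by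
      intro p q h; rw [hf5] at h; simp only [HVert.e.injEq] at h; exact Subtype.ext h
    have fin1 : (f1 '' (A ×ˢ Set.univ)).Finite := (Set.toFinite _).image _
    have fin2 : (f2 '' (A ×ˢ Set.univ)).Finite := (Set.toFinite _).image _
    have fin3 : (f3 '' (Aᶜ ×ˢ Set.univ)).Finite := (Set.toFinite _).image _
    have fin4 : (f4 '' (Aᶜ ×ˢ Set.univ)).Finite := (Set.toFinite _).image _
    have fin5 : (f5 '' T).Finite := (Set.toFinite _).image _
    have hd12 : Disjoint (f1 '' (A ×ˢ Set.univ)) (f2 '' (A ×ˢ Set.univ)) := by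
      rw [Set.disjoint_right]; rintro _ ⟨q, hq, rfl⟩ ⟨p, hp, hpe⟩
      simp [hf1, hf2] at hpe
    have hd123 : Disjoint (f1 '' (A ×ˢ Set.univ) ∪ f2 '' (A ×ˢ Set.univ))
        (f3 '' (Aᶜ ×ˢ Set.univ)) := by
      rw [Set.disjoint_right]; rintro _ ⟨q, hq, rfl⟩ (⟨p, hp, hpe⟩ | ⟨p, hp, hpe⟩) <;>
        simp [hf1, hf2, hf3] at hpe
    have hd1234 : Disjoint (f1 '' (A ×ˢ Set.univ) ∪ f2 '' (A ×ˢ Set.univ)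
        ∪ f3 '' (Aᶜ ×ˢ Set.univ)) (f4 '' (Aᶜ ×ˢ Set.univ)) := by
      rw [Set.disjoint_right]
      rintro _ ⟨q, hq, rfl⟩ ((⟨p, hp, hpe⟩ | ⟨p, hp, hpe⟩) | ⟨p, hp, hpe⟩) <;>
        simp [hf1, hf2, hf3, hf4] at hpe
    have hd12345 : Disjoint (f1 '' (A ×ˢ Set.univ) ∪ f2 '' (A ×ˢ Set.univ)
        ∪ f3 '' (Aᶜ ×ˢ Set.univ) ∪ f4 '' (Aᶜ ×ˢ Set.univ)) (f5 '' T) := by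
      rw [Set.disjoint_right]
      rintro _ ⟨q, hq, rfl⟩ (((⟨p, hp, hpe⟩ | ⟨p, hp, hpe⟩) | ⟨p, hp, hpe⟩) | ⟨p, hp, hpe⟩) <;>
        simp [hf1, hf2, hf3, hf4, hf5] at hpe
    have hKP : {p : V × V | G.Adj p.1 p.2 ∧ p.1 ∈ A ∧ p.2 ∉ A}
        ⊆ {p : V × V | G.Adj p.1 p.2} := fun p hp => hp.1
    have hPfin : ({p : V × V | G.Adj p.1 p.2}).Finite := Set.toFinite _
    have hdart : Nat.card G.Dart = 2 * m := by
      rw [Nat.card_eq_fintype_card, SimpleGraph.dart_card_eq_twice_card_edges, ← hm,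
        Set.ncard_eq_toFinset_card', SimpleGraph.edgeFinset]
    have hPcard : ({p : V × V | G.Adj p.1 p.2}).ncard = 2 * m := by
      rw [← Nat.card_coe_set_eq, ← hdart]
      exact Nat.card_congr
        ⟨fun q => ⟨q.1, q.2⟩, fun d => ⟨d.toProd, d.adj⟩, fun q => rfl, fun d => by cases d; rfl⟩
    have hk2m : k ≤ 2 * m := by
      rw [← hk, ← hPcard]; exact Set.ncard_le_ncard hKP hPfin
    have hPK : Subtype.val '' T = {p : V × V | G.Adj p.1 p.2}
        \ {p : V × V | G.Adj p.1 p.2 ∧ p.1 ∈ A ∧ p.2 ∉ A} := by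
      ext p
      simp only [hT, Set.mem_image, Set.mem_setOf_eq, Subtype.exists, Set.mem_diff,
        exists_and_right, exists_eq_right]
      by_cases hadj : G.Adj p.1 p.2 <;> by_cases h1 : p.1 ∈ A <;> by_cases h2 : p.2 ∈ A <;>
        simp [hadj, h1, h2]
    have hTcard : T.ncard = 2 * m - k := by
      rw [← Set.ncard_image_of_injective T Subtype.val_injective, hPK,
        Set.ncard_diff hKP, hPcard, hk]
    rw [hU, Set.ncard_union_eq hd12345 ((fin1.union fin2).union fin3 |>.union fin4) fin5,
      Set.ncard_union_eq hd1234 ((fin1.union fin2).union fin3) fin4,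
      Set.ncard_union_eq hd123 (fin1.union fin2) fin3,
      Set.ncard_union_eq hd12 fin1 fin2,
      Set.ncard_image_of_injective _ inj1, Set.ncard_image_of_injective _ inj2,
      Set.ncard_image_of_injective _ inj3, Set.ncard_image_of_injective _ inj4,
      Set.ncard_image_of_injective _ inj5, hprod, hprod, hprod, hprod, hTcard, ← ha, ← hb]
    have key : a*(2*n) + a*(2*n+1) + bb*(2*n) + bb*(2*n+1) = 4*n^2 + n := by
      have h1 : a*(2*n) + a*(2*n+1) + bb*(2*n) + bb*(2*n+1) = (a+bb)*(4*n+1) := by ring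
      rw [h1, hab]; ring
    rw [Nat.add_sub_assoc hk2m, ← key]

  · rintro ⟨⟨s, hs⟩, hsS, c, hc⟩
    refine no_cycle_of_unique_nbr ?_ c hc
    rintro ⟨p, hp⟩ ⟨q, hq⟩ hap haq
    have hap' : (HG V G n).Adj s p := hap
    have haq' : (HG V G n).Adj s q := haq
    apply Subtype.ext
    obtain ⟨v, i, rfl⟩ | ⟨v, i, rfl⟩ | ⟨v, j, rfl⟩ | ⟨v, j, rfl⟩ := hsS
    · have hv : v ∉ A := hs
      rcases adj_cases_x hap' with ⟨j1, rfl⟩ | ⟨u1, hu1, rfl⟩ | ⟨j1, hr1, rfl⟩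
      · exact absurd hv hp
      · exact absurd (not_not.mp hp).1 hv
      · rcases adj_cases_x haq' with ⟨j2, rfl⟩ | ⟨u2, hu2, rfl⟩ | ⟨j2, hr2, rfl⟩
        · exact absurd hv hq
        · exact absurd (not_not.mp hq).1 hv
        · have := j1.isLt; have := j2.isLt; have := i.isLt
          rcases hr1 with hr1 | hr1 <;> rcases hr2 with hr2 | hr2 <;>
            exact congrArg (x v) (Fin.ext (by omega))
    · have hv : v ∈ A := not_not.mp hs
      rcases adj_cases_xb hap' with ⟨j1, rfl⟩ | ⟨u1, hu1, rfl⟩ | ⟨j1, hr1, rfl⟩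
      · exact absurd hv hp
      · exact absurd hv (not_not.mp hp).2.elim
      · rcases adj_cases_xb haq' with ⟨j2, rfl⟩ | ⟨u2, hu2, rfl⟩ | ⟨j2, hr2, rfl⟩
        · exact absurd hv hq
        · exact absurd hv (not_not.mp hq).2.elim
        · have := j1.isLt; have := j2.isLt; have := i.isLt
          rcases hr1 with hr1 | hr1 <;> rcases hr2 with hr2 | hr2 <;>
            exact congrArg (xb v) (Fin.ext (by omega))
    · rcases adj_cases_z hap' with rfl | rfl <;> rcases adj_cases_z haq' with rfl | rfl
      · rfl
      · exact absurd (not_not.mp hp) hq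
      · exact absurd (not_not.mp hq) hp
      · rfl
    · rcases adj_cases_zb hap' with rfl | rfl <;> rcases adj_cases_zb haq' with rfl | rfl
      · rfl
      · exact absurd (not_not.mp hp) hq
      · exact absurd (not_not.mp hq) hp
      · rfl
end
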